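/- arXiv:1003.0373 — 4 statements merged into one kernel-verified Lean document; each statement's English description precedes it below -/
import Mathlib

section
/- Let R be a commutative ring in which 2 is invertible and E an R-module, with data: a symmetric bilinear form B : E × E → R, R-linear in each argument; a bracket ∘ : E × E → E, additive in each argument; and a map δ assigning to each e ∈ E an additive map δ(e) : R → R. Then the conjunction of (CJ2) δ(e₁)(B(e₂,e₃)) = B(e₁, e₂∘e₃ + e₃∘e₂) and (CJ3) δ(e₁)(B(e₂,e₃)) = B(e₁∘e₂, e₃) + B(e₂, e₁∘e₃), for all e₁, e₂, e₃ ∈ E, is equivalent to the conjunction of (CJ'3) B(e₁∘e, e) = B(e₁, e∘e) and (CJ'4) δ(e₁)(B(e,e)) = 2·B(e₁∘e, e), for all e₁, e ∈ E. -/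
/-!
The symmetrization `f x y + f y x` of a biadditive map is determined by its diagonal. Polarizing
CJ'4 gives twice CJ3 (halved using `⅟2` and the symmetry of `B`), and polarizing CJ'3 gives
`B(e₁∘x, y) + B(e₁∘y, x) = B(e₁, x∘y + y∘x)`, whose left side is the right side of CJ3; hence CJ2.
Conversely CJ'4 and twice CJ'3 are CJ3 and CJ2 at `e₂ = e₃`.
-/

theorem add_apply_swap_eq_of_diag_eq {E M : Type*} [Add E] [AddCommGroup M] {f g : E → E → M}
    (hf_addl : ∀ x y z, f (x + y) z = f x z + f y z) (hf_addr : ∀ x y z, f x (y + z) = f x y + f x z)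
    (hg_addl : ∀ x y z, g (x + y) z = g x z + g y z) (hg_addr : ∀ x y z, g x (y + z) = g x y + g x z)
    (h : ∀ x, f x x = g x x) (x y : E) : f x y + f y x = g x y + g y x := by
  have hxy := h (x + y)
  rw [hf_addl, hf_addr, hf_addr, hg_addl, hg_addr, hg_addr, h x, h y] at hxy
  grind

namespace CourantJacobi

variable {R E : Type*} [CommRing R] (B : E → E → R) (br : E → E → E)
  (δ : E → R → R)

def CJ2 [Add E] : Prop := ∀ e₁ e₂ e₃ : E, δ e₁ (B e₂ e₃) = B e₁ (br e₂ e₃ + br e₃ e₂)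

def CJ3 : Prop := ∀ e₁ e₂ e₃ : E, δ e₁ (B e₂ e₃) = B (br e₁ e₂) e₃ + B e₂ (br e₁ e₃)

def CJ3' : Prop := ∀ e₁ e : E, B (br e₁ e) e = B e₁ (br e e)

def CJ4' : Prop := ∀ e₁ e : E, δ e₁ (B e e) = 2 * B (br e₁ e) e

variable {B br δ}

theorem cj4'_of_cj3 (hB_symm : ∀ x y, B x y = B y x) (h3 : CJ3 B br δ) : CJ4' B br δ := by
  intro e₁ e
  rw [h3, hB_symm e, two_mul]

variable [Add E]

theorem cj3'_of_cj2_of_cj3 [Invertible (2 : R)] (hB_symm : ∀ x y, B x y = B y x)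
    (hB_addr : ∀ x y z, B x (y + z) = B x y + B x z) (h2 : CJ2 B br δ) (h3 : CJ3 B br δ) :
    CJ3' B br := by
  intro e₁ e
  refine (isUnit_of_invertible (2 : R)).mul_left_cancel ?_
  rw [← cj4'_of_cj3 hB_symm h3, h2, hB_addr, two_mul]

theorem cj3_of_cj4' [Invertible (2 : R)] (hB_symm : ∀ x y, B x y = B y x)
    (hB_addl : ∀ x y z, B (x + y) z = B x z + B y z)
    (hB_addr : ∀ x y z, B x (y + z) = B x y + B x z)
    (hbr_addr : ∀ x y z, br x (y + z) = br x y + br x z)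
    (hδ_add : ∀ (e : E) (f g : R), δ e (f + g) = δ e f + δ e g) (h4' : CJ4' B br δ) :
    CJ3 B br δ := by
  intro e₁ x y
  have hpol := add_apply_swap_eq_of_diag_eq (f := fun x y => δ e₁ (B x y))
    (g := fun x y => 2 * B (br e₁ x) y)
    (by intros; simp only [hB_addl, hδ_add]) (by intros; simp only [hB_addr, hδ_add])
    (by intros; simp only [hbr_addr, hB_addl, mul_add]) (by intros; simp only [hB_addr, mul_add])
    (h4' e₁) x y
  refine (isUnit_of_invertible (2 : R)).mul_left_cancel ?_
  rw [hB_symm y x, hB_symm (br e₁ y) x, ← two_mul] at hpol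
  rw [hpol, mul_add]

theorem cj2_of_cj3_of_cj3' (hB_symm : ∀ x y, B x y = B y x)
    (hB_addl : ∀ x y z, B (x + y) z = B x z + B y z)
    (hB_addr : ∀ x y z, B x (y + z) = B x y + B x z)
    (hbr_addl : ∀ x y z, br (x + y) z = br x z + br y z)
    (hbr_addr : ∀ x y z, br x (y + z) = br x y + br x z)
    (h3 : CJ3 B br δ) (h3' : CJ3' B br) : CJ2 B br δ := by
  intro e₁ x y
  have hpol := add_apply_swap_eq_of_diag_eq (f := fun x y => B (br e₁ x) y)
    (g := fun x y => B e₁ (br x y))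
    (by intros; simp only [hbr_addr, hB_addl]) (by intros; simp only [hB_addr])
    (by intros; simp only [hbr_addl, hB_addr]) (by intros; simp only [hbr_addr, hB_addr])
    (h3' e₁) x y
  rw [h3, hB_symm x, hpol, hB_addr]

end CourantJacobi

open CourantJacobi in
theorem cj2_cj3_iff_cj3'_cj4'_general
    {R E : Type*} [CommRing R] [Invertible (2 : R)] [AddCommGroup E]
    (B : E → E → R)
    (hB_symm : ∀ x y, B x y = B y x)
    (hB_addl : ∀ x y z, B (x + y) z = B x z + B y z)
    (hB_addr : ∀ x y z, B x (y + z) = B x y + B x z)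
    (br : E → E → E)
    (hbr_addl : ∀ x y z, br (x + y) z = br x z + br y z)
    (hbr_addr : ∀ x y z, br x (y + z) = br x y + br x z)
    (δ : E → R → R)
    (hδ_add : ∀ (e : E) (f g : R), δ e (f + g) = δ e f + δ e g) :
    ((∀ e₁ e₂ e₃ : E, δ e₁ (B e₂ e₃) = B e₁ (br e₂ e₃ + br e₃ e₂)) ∧
        (∀ e₁ e₂ e₃ : E, δ e₁ (B e₂ e₃) = B (br e₁ e₂) e₃ + B e₂ (br e₁ e₃))) ↔
      ((∀ e₁ e : E, B (br e₁ e) e = B e₁ (br e e)) ∧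
        (∀ e₁ e : E, δ e₁ (B e e) = 2 * B (br e₁ e) e)) := by
  constructor
  · rintro ⟨h2, h3⟩
    exact ⟨cj3'_of_cj2_of_cj3 hB_symm hB_addr h2 h3, cj4'_of_cj3 hB_symm h3⟩
  · rintro ⟨h3', h4'⟩
    have h3 : CJ3 B br δ := cj3_of_cj4' hB_symm hB_addl hB_addr hbr_addr hδ_add h4'
    exact ⟨cj2_of_cj3_of_cj3' hB_symm hB_addl hB_addr hbr_addl hbr_addr h3 h3', h3⟩

/-- **Algebraic part of the equivalence of the two definitions of Courant-Jacobi algebroid**: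
the conjunction of axioms CJ2 and CJ3 is equivalent to the conjunction of axioms CJ'3 and CJ'4,
over a commutative ring `R` in which `2` is invertible. -/
theorem cj2_cj3_iff_cj3'_cj4'
    {R E : Type*} [CommRing R] [Invertible (2 : R)] [AddCommGroup E] [Module R E]
    (B : E → E → R)
    (hB_symm : ∀ x y, B x y = B y x)
    (hB_addl : ∀ x y z, B (x + y) z = B x z + B y z)
    (hB_smull : ∀ (r : R) (x z : E), B (r • x) z = r * B x z)
    (hB_addr : ∀ x y z, B x (y + z) = B x y + B x z)
    (hB_smulr : ∀ (r : R) (x z : E), B x (r • z) = r * B x z)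
    (br : E → E → E)
    (hbr_addl : ∀ x y z, br (x + y) z = br x z + br y z)
    (hbr_addr : ∀ x y z, br x (y + z) = br x y + br x z)
    (δ : E → R → R)
    (hδ_add : ∀ (e : E) (f g : R), δ e (f + g) = δ e f + δ e g) :
    ((∀ e₁ e₂ e₃ : E, δ e₁ (B e₂ e₃) = B e₁ (br e₂ e₃ + br e₃ e₂)) ∧
        (∀ e₁ e₂ e₃ : E, δ e₁ (B e₂ e₃) = B (br e₁ e₂) e₃ + B e₂ (br e₁ e₃))) ↔
      ((∀ e₁ e : E, B (br e₁ e) e = B e₁ (br e e)) ∧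
        (∀ e₁ e : E, δ e₁ (B e e) = 2 * B (br e₁ e) e)) :=
  cj2_cj3_iff_cj3'_cj4'_general B hB_symm hB_addl hB_addr br hbr_addl hbr_addr δ hδ_add
end

section
/- Let R be a commutative ring and E an R-module, with data: a bilinear form B : E × E → R, R-linear in each argument, which is nondegenerate in the sense that if B(e, x) = 0 for all e ∈ E then x = 0; a bracket ∘ : E × E → E; maps δ : E → (maps R → R) and θ : E → R such that each δ(e) satisfies the first-order operator identity δ(e)(fg) = δ(e)(f)·g + f·δ(e)(g) − θ(e)·f·g for all f, g ∈ R. Assume the axiom (CJ3): δ(e₁)(B(e₂,e₃)) = B(e₁∘e₂, e₃) + B(e₂, e₁∘e₃) for all e₁, e₂, e₃ ∈ E. Then for all e₁, e₃ ∈ E and f ∈ R one has e₁∘(f·e₃) = f·(e₁∘e₃) + (δ(e₁)(f) − f·θ(e₁))·e₃. -/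
/-!
Pair both sides with an arbitrary `e`. Applying CJ3 to `(e₁, e, f • e₃)` and to `(e₁, e, e₃)`,
and expanding `δ e₁ (f * B e e₃)` by the Leibniz rule, the terms `B (e₁ ∘ e) e₃` cancel and leave
`B e (e₁ ∘ (f • e₃)) = f * B e (e₁ ∘ e₃) + (δ e₁ f - f * θ e₁) * B e e₃`,
which is the pairing of `e` with the right-hand side. Nondegeneracy concludes.
-/

theorem eq_of_forall_pairing_eq {R E : Type*} [Ring R] [AddCommGroup E]
    (B : E → E → R) (hB_addr : ∀ x y z, B x (y + z) = B x y + B x z)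
    (hB_nondeg : ∀ x : E, (∀ e : E, B e x = 0) → x = 0) {x y : E}
    (h : ∀ e, B e x = B e y) : x = y := by
  refine sub_eq_zero.mp (hB_nondeg _ fun e => ?_)
  have h_sub : B e (x - y) = B e x - B e y := map_sub (AddMonoidHom.mk' (B e) (hB_addr e)) x y
  rw [h_sub, h e, sub_self]

theorem pairing_bracket_smul {R E : Type*} [CommRing R] [AddCommGroup E] [Module R E]
    (B : E → E → R) (hB_smulr : ∀ (r : R) (x z : E), B x (r • z) = r * B x z)
    (br : E → E → E) (δ : E → R → R) (θ : E → R)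
    (hδ_leibniz : ∀ (e : E) (f g : R), δ e (f * g) = δ e f * g + f * δ e g - θ e * f * g)
    (hCJ3 : ∀ e₁ e₂ e₃ : E, δ e₁ (B e₂ e₃) = B (br e₁ e₂) e₃ + B e₂ (br e₁ e₃))
    (e e₁ e₃ : E) (f : R) :
    B e (br e₁ (f • e₃)) = f * B e (br e₁ e₃) + (δ e₁ f - f * θ e₁) * B e e₃ := by
  have h := hCJ3 e₁ e e₃
  have h_smul := hCJ3 e₁ e (f • e₃)
  rw [hB_smulr, hB_smulr, hδ_leibniz] at h_smul
  linear_combination f * h - h_smul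

theorem bracket_smul_formula_general
    {R E : Type*} [CommRing R] [AddCommGroup E] [Module R E]
    (B : E → E → R)
    (hB_addr : ∀ x y z, B x (y + z) = B x y + B x z)
    (hB_smulr : ∀ (r : R) (x z : E), B x (r • z) = r * B x z)
    (hB_nondeg : ∀ x : E, (∀ e : E, B e x = 0) → x = 0)
    (br : E → E → E)
    (δ : E → R → R) (θ : E → R)
    (hδ_leibniz : ∀ (e : E) (f g : R), δ e (f * g) = δ e f * g + f * δ e g - θ e * f * g)
    (hCJ3 : ∀ e₁ e₂ e₃ : E, δ e₁ (B e₂ e₃) = B (br e₁ e₂) e₃ + B e₂ (br e₁ e₃)) :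
    ∀ (e₁ e₃ : E) (f : R),
      br e₁ (f • e₃) = f • br e₁ e₃ + (δ e₁ f - f * θ e₁) • e₃ := by
  intro e₁ e₃ f
  refine eq_of_forall_pairing_eq B hB_addr hB_nondeg fun e => ?_
  rw [pairing_bracket_smul B hB_smulr br δ θ hδ_leibniz hCJ3, hB_addr, hB_smulr, hB_smulr]

/-- **The Leibniz-type formula for the Courant-Jacobi bracket against multiplication of a
section by a function**, derived from axiom CJ3 and nondegeneracy of the pairing:
`e₁ ∘ (f • e₃) = f • (e₁ ∘ e₃) + (δ e₁ f - f * θ e₁) • e₃`. -/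
theorem bracket_smul_formula
    {R E : Type*} [CommRing R] [AddCommGroup E] [Module R E]
    (B : E → E → R)
    (hB_addl : ∀ x y z, B (x + y) z = B x z + B y z)
    (hB_smull : ∀ (r : R) (x z : E), B (r • x) z = r * B x z)
    (hB_addr : ∀ x y z, B x (y + z) = B x y + B x z)
    (hB_smulr : ∀ (r : R) (x z : E), B x (r • z) = r * B x z)
    (hB_nondeg : ∀ x : E, (∀ e : E, B e x = 0) → x = 0)
    (br : E → E → E)
    (δ : E → R → R) (θ : E → R)
    (hδ_leibniz : ∀ (e : E) (f g : R), δ e (f * g) = δ e f * g + f * δ e g - θ e * f * g)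
    (hCJ3 : ∀ e₁ e₂ e₃ : E, δ e₁ (B e₂ e₃) = B (br e₁ e₂) e₃ + B e₂ (br e₁ e₃)) :
    ∀ (e₁ e₃ : E) (f : R),
      br e₁ (f • e₃) = f • br e₁ e₃ + (δ e₁ f - f * θ e₁) • e₃ :=
  bracket_smul_formula_general B hB_addr hB_smulr hB_nondeg br δ θ hδ_leibniz hCJ3
end

section
/- Let R be a commutative ring and E an R-module, with data: a bracket ∘ : E × E → E additive in its second argument; a map δ assigning to each e ∈ E an additive map δ(e) : R → R; and a map θ : E → R, such that each δ(e) satisfies δ(e)(fg) = δ(e)(f)·g + f·δ(e)(g) − θ(e)·f·g for all f, g ∈ R. Assume: (i) the Jacobi/Leibniz identity e₁∘(e₂∘e₃) = (e₁∘e₂)∘e₃ + e₂∘(e₁∘e₃) for all e₁, e₂, e₃ ∈ E, and (ii) the scalar formula e∘(f·e') = f·(e∘e') + (δ(e)(f) − f·θ(e))·e' for all e, e' ∈ E and f ∈ R. Then for all e₁, e₂, e₃ ∈ E and f ∈ R: (δ(e₁∘e₂)(f) − θ(e₁∘e₂)·f)·e₃ = (δ(e₁)(δ(e₂)(f)) −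 δ(e₂)(δ(e₁)(f)) − δ(e₁)(θ(e₂))·f + δ(e₂)(θ(e₁))·f)·e₃. -/
/-!
Write `D e f := δ(e)(f) - f θ(e)`, so that the scalar formula reads
`e ∘ (f e') = f (e ∘ e') + D e f • e'`. Applying it twice expands `e₁ ∘ (e₂ ∘ (f e₃))` as
`f (e₁ ∘ (e₂ ∘ e₃))` plus terms in `e₂ ∘ e₃`, `e₁ ∘ e₃` and `D e₁ (D e₂ f) • e₃`. Expanding the
same element through the Jacobi identity instead and cancelling the `f`-multiples (Jacobi again)
leaves `D (e₁ ∘ e₂) f • e₃ = (D e₁ (D e₂ f) - D e₂ (D e₁ f)) • e₃`. The Leibniz rule for `δ`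
then turns the commutator `[D e₁, D e₂] f` into the right-hand side.
-/

section CourantJacobi

variable {R E : Type*} [CommRing R]

def twistedDeriv (δ : E → R → R) (θ : E → R) (e : E) (f : R) : R :=
  δ e f - f * θ e

variable {δ : E → R → R} {θ : E → R}

theorem twistedDeriv_commutator
    (hδ_add : ∀ (e : E) (f g : R), δ e (f + g) = δ e f + δ e g)
    (hδ_leibniz : ∀ (e : E) (f g : R), δ e (f * g) = δ e f * g + f * δ e g - θ e * f * g)
    (e₁ e₂ : E) (f : R) :
    twistedDeriv δ θ e₁ (twistedDeriv δ θ e₂ f) - twistedDeriv δ θ e₂ (twistedDeriv δ θ e₁ f) =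
      δ e₁ (δ e₂ f) - δ e₂ (δ e₁ f) - δ e₁ (θ e₂) * f + δ e₂ (θ e₁) * f := by
  have hδ_sub (e : E) (f g : R) : δ e (f - g) = δ e f - δ e g :=
    map_sub (AddMonoidHom.mk' (δ e) (hδ_add e)) f g
  simp only [twistedDeriv, hδ_sub, hδ_leibniz]
  ring

variable [AddCommGroup E] [Module R E] {br : E → E → E}

theorem bracket_bracket_smul
    (hbr_addr : ∀ x y z, br x (y + z) = br x y + br x z)
    (hscalar : ∀ (e e' : E) (f : R), br e (f • e') = f • br e e' + twistedDeriv δ θ e f • e')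
    (e₁ e₂ e₃ : E) (f : R) :
    br e₁ (br e₂ (f • e₃)) =
      f • br e₁ (br e₂ e₃) + twistedDeriv δ θ e₁ f • br e₂ e₃ +
        twistedDeriv δ θ e₂ f • br e₁ e₃ +
          twistedDeriv δ θ e₁ (twistedDeriv δ θ e₂ f) • e₃ := by
  rw [hscalar e₂, hbr_addr, hscalar e₁, hscalar e₁]
  abel

theorem twistedDeriv_bracket_smul
    (hbr_addr : ∀ x y z, br x (y + z) = br x y + br x z)
    (hCJ1 : ∀ e₁ e₂ e₃ : E, br e₁ (br e₂ e₃) = br (br e₁ e₂) e₃ + br e₂ (br e₁ e₃))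
    (hscalar : ∀ (e e' : E) (f : R), br e (f • e') = f • br e e' + twistedDeriv δ θ e f • e')
    (e₁ e₂ e₃ : E) (f : R) :
    twistedDeriv δ θ (br e₁ e₂) f • e₃ =
      (twistedDeriv δ θ e₁ (twistedDeriv δ θ e₂ f) -
        twistedDeriv δ θ e₂ (twistedDeriv δ θ e₁ f)) • e₃ := by
  have h := hCJ1 e₁ e₂ (f • e₃)
  rw [bracket_bracket_smul hbr_addr hscalar, bracket_bracket_smul hbr_addr hscalar,
    hscalar, hCJ1 e₁ e₂ e₃] at h
  linear_combination (norm := module) -h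

end CourantJacobi

/-- **Expansion of `e₁ ∘ (e₂ ∘ (f • e₃))` in two ways**, using the Jacobi/Leibniz identity CJ1
and the Leibniz-type scalar formula for the bracket, identifying the first-order operator of
the anchor of `e₁ ∘ e₂` with the commutator of the operators of `e₁` and `e₂`. -/
theorem anchor_operator_commutator
    {R E : Type*} [CommRing R] [AddCommGroup E] [Module R E]
    (br : E → E → E)
    (hbr_addr : ∀ x y z, br x (y + z) = br x y + br x z)
    (δ : E → R → R)
    (hδ_add : ∀ (e : E) (f g : R), δ e (f + g) = δ e f + δ e g)
    (θ : E → R)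
    (hδ_leibniz : ∀ (e : E) (f g : R), δ e (f * g) = δ e f * g + f * δ e g - θ e * f * g)
    (hCJ1 : ∀ e₁ e₂ e₃ : E, br e₁ (br e₂ e₃) = br (br e₁ e₂) e₃ + br e₂ (br e₁ e₃))
    (hscalar : ∀ (e e' : E) (f : R),
      br e (f • e') = f • br e e' + (δ e f - f * θ e) • e') :
    ∀ (e₁ e₂ e₃ : E) (f : R),
      (δ (br e₁ e₂) f - θ (br e₁ e₂) * f) • e₃ =
        (δ e₁ (δ e₂ f) - δ e₂ (δ e₁ f) - δ e₁ (θ e₂) * f + δ e₂ (θ e₁) * f) • e₃ := by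
  intro e₁ e₂ e₃ f
  rw [← twistedDeriv_commutator hδ_add hδ_leibniz, mul_comm,
    ← twistedDeriv_bracket_smul hbr_addr hCJ1 hscalar]
  rfl
end

section
/- Let R be a commutative ring and E an R-module, with data: a form B : E × E → R additive in each argument; a bracket ∘ : E × E → E additive in each argument; and a map δ assigning to each e ∈ E an additive map δ(e) : R → R. Assume: (CJ1) e₁∘(e₂∘e₃) = (e₁∘e₂)∘e₃ + e₂∘(e₁∘e₃) for all e₁, e₂, e₃ ∈ E, and (CJ3) δ(e₁)(B(e₂,e₃)) = B(e₁∘e₂, e₃) + B(e₂, e₁∘e₃) for all e₁, e₂, e₃ ∈ E. Then for all e₁, e₂, e₃, e₄ ∈ E: δ(e₁∘e₂)(B(e₃,e₄)) = δ(e₁)(δ(e₂)(B(e₃,e₄))) − δ(e₂)(δ(e₁)(B(e₃,e₄))). -/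
/-!
Applying CJ3 twice expands `δ e₁ (δ e₂ (B e₃ e₄))` into four pairings. In the commutator the two
mixed terms `B (e₂ ∘ e₃) (e₁ ∘ e₄)` and `B (e₁ ∘ e₃) (e₂ ∘ e₄)` cancel, and the Leibniz rule CJ1
turns the remaining ones into `B ((e₁ ∘ e₂) ∘ e₃) e₄ + B e₃ ((e₁ ∘ e₂) ∘ e₄)`, which is
`δ (e₁ ∘ e₂) (B e₃ e₄)` by CJ3 once more.
-/

theorem delta_delta_pairing {R E : Type*} [Add R] (B : E → E → R) (br : E → E → E)
    (δ : E → R → R) (hδ_add : ∀ (e : E) (f g : R), δ e (f + g) = δ e f + δ e g)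
    (hCJ3 : ∀ e₁ e₂ e₃ : E, δ e₁ (B e₂ e₃) = B (br e₁ e₂) e₃ + B e₂ (br e₁ e₃))
    (e₁ e₂ e₃ e₄ : E) :
    δ e₁ (δ e₂ (B e₃ e₄)) =
      B (br e₁ (br e₂ e₃)) e₄ + B (br e₂ e₃) (br e₁ e₄) +
        (B (br e₁ e₃) (br e₂ e₄) + B e₃ (br e₁ (br e₂ e₄))) := by
  rw [hCJ3 e₂, hδ_add, hCJ3, hCJ3]

theorem anchor_commutator_on_pairings_general
    {R E : Type*} [CommRing R] [AddCommGroup E]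
    (B : E → E → R)
    (hB_addl : ∀ x y z, B (x + y) z = B x z + B y z)
    (hB_addr : ∀ x y z, B x (y + z) = B x y + B x z)
    (br : E → E → E)
    (δ : E → R → R)
    (hδ_add : ∀ (e : E) (f g : R), δ e (f + g) = δ e f + δ e g)
    (hCJ1 : ∀ e₁ e₂ e₃ : E, br e₁ (br e₂ e₃) = br (br e₁ e₂) e₃ + br e₂ (br e₁ e₃))
    (hCJ3 : ∀ e₁ e₂ e₃ : E, δ e₁ (B e₂ e₃) = B (br e₁ e₂) e₃ + B e₂ (br e₁ e₃)) :
    ∀ e₁ e₂ e₃ e₄ : E,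
      δ (br e₁ e₂) (B e₃ e₄) = δ e₁ (δ e₂ (B e₃ e₄)) - δ e₂ (δ e₁ (B e₃ e₄)) := by
  intro e₁ e₂ e₃ e₄
  rw [eq_sub_iff_add_eq, hCJ3 (br e₁ e₂), delta_delta_pairing B br δ hδ_add hCJ3 e₁,
    delta_delta_pairing B br δ hδ_add hCJ3 e₂, hCJ1 e₁ e₂ e₃, hCJ1 e₁ e₂ e₄, hB_addl, hB_addr]
  ring

/-- From axioms CJ1 and CJ3, the operator associated to the anchor of `e₁ ∘ e₂` agrees with
the commutator of the operators of `e₁` and `e₂` on every function of the form `B e₃ e₄`. -/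
theorem anchor_commutator_on_pairings
    {R E : Type*} [CommRing R] [AddCommGroup E] [Module R E]
    (B : E → E → R)
    (hB_addl : ∀ x y z, B (x + y) z = B x z + B y z)
    (hB_addr : ∀ x y z, B x (y + z) = B x y + B x z)
    (br : E → E → E)
    (hbr_addl : ∀ x y z, br (x + y) z = br x z + br y z)
    (hbr_addr : ∀ x y z, br x (y + z) = br x y + br x z)
    (δ : E → R → R)
    (hδ_add : ∀ (e : E) (f g : R), δ e (f + g) = δ e f + δ e g)
    (hCJ1 : ∀ e₁ e₂ e₃ : E, br e₁ (br e₂ e₃) = br (br e₁ e₂) e₃ + br e₂ (br e₁ e₃))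
    (hCJ3 : ∀ e₁ e₂ e₃ : E, δ e₁ (B e₂ e₃) = B (br e₁ e₂) e₃ + B e₂ (br e₁ e₃)) :
    ∀ e₁ e₂ e₃ e₄ : E,
      δ (br e₁ e₂) (B e₃ e₄) = δ e₁ (δ e₂ (B e₃ e₄)) - δ e₂ (δ e₁ (B e₃ e₄)) :=
  anchor_commutator_on_pairings_general B hB_addl hB_addr br δ hδ_add hCJ1 hCJ3
end
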